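/- arXiv:2307.16358 — 3 statements merged into one kernel-verified Lean document; each statement's English description precedes it below -/
import Mathlib

section
/- Let g : ℝ^d → ℝ be convex, λ > 0, and let p : ℝ^d → ℝ^d be a map such that for every x, p(x) minimizes y ↦ g(y) + ‖x − y‖²/(2λ) over ℝ^d. Then the Moreau–Yoshida envelope g^λ is differentiable at every x ∈ ℝ^d with gradient ∇g^λ(x) = (x − p(x))/λ. -/
open scoped RealInnerProductSpace

/-- The Moreau–Yoshida envelope of `g` with scaling parameter `lam`:
`g^lam(x) = inf_y ( g(y) + ‖x − y‖² / (2 lam) )`. -/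
noncomputable def moreauEnv {d : ℕ} (g : EuclideanSpace ℝ (Fin d) → ℝ) (lam : ℝ)
    (x : EuclideanSpace ℝ (Fin d)) : ℝ :=
  ⨅ y : EuclideanSpace ℝ (Fin d), (g y + ‖x - y‖ ^ 2 / (2 * lam))

section aux
variable {d : ℕ} (g : EuclideanSpace ℝ (Fin d) → ℝ) (lam : ℝ)
  (p : EuclideanSpace ℝ (Fin d) → EuclideanSpace ℝ (Fin d))

lemma moreauEnv_le
    (hp : ∀ x z : EuclideanSpace ℝ (Fin d),
      g (p x) + ‖x - p x‖ ^ 2 / (2 * lam) ≤ g z + ‖x - z‖ ^ 2 / (2 * lam))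
    (x z : EuclideanSpace ℝ (Fin d)) :
    moreauEnv g lam x ≤ g z + ‖x - z‖ ^ 2 / (2 * lam) :=
  ciInf_le ⟨g (p x) + ‖x - p x‖ ^ 2 / (2 * lam), by
    rintro _ ⟨y, rfl⟩; exact hp x y⟩ z

lemma moreauEnv_eq
    (hp : ∀ x z : EuclideanSpace ℝ (Fin d),
      g (p x) + ‖x - p x‖ ^ 2 / (2 * lam) ≤ g z + ‖x - z‖ ^ 2 / (2 * lam))
    (x : EuclideanSpace ℝ (Fin d)) :
    moreauEnv g lam x = g (p x) + ‖x - p x‖ ^ 2 / (2 * lam) :=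
  le_antisymm (moreauEnv_le g lam p hp x (p x)) (le_ciInf (hp x))

/-- Subgradient-type inequality for the prox point. -/
lemma prox_inner_le (hg : ConvexOn ℝ Set.univ g) (hlam : 0 < lam)
    (hp : ∀ x z : EuclideanSpace ℝ (Fin d),
      g (p x) + ‖x - p x‖ ^ 2 / (2 * lam) ≤ g z + ‖x - z‖ ^ 2 / (2 * lam))
    (x z : EuclideanSpace ℝ (Fin d)) :
    ⟪x - p x, z - p x⟫ ≤ lam * (g z - g (p x)) := by
  have key : ∀ t : ℝ, 0 < t → t ≤ 1 →
      ⟪x - p x, z - p x⟫ ≤ lam * (g z - g (p x)) + t * ‖z - p x‖ ^ 2 / 2 := by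
    intro t ht ht1
    have hconv := hg.2 (Set.mem_univ (p x)) (Set.mem_univ z)
      (show (0:ℝ) ≤ 1 - t by linarith) ht.le (by ring)
    have hmin := hp x ((1 - t) • p x + t • z)
    have hrw : x - ((1 - t) • p x + t • z) = (x - p x) - t • (z - p x) := by
      module
    rw [hrw] at hmin
    have hnorm : ‖(x - p x) - t • (z - p x)‖ ^ 2
        = ‖x - p x‖ ^ 2 - 2 * (t * ⟪x - p x, z - p x⟫) + t ^ 2 * ‖z - p x‖ ^ 2 := by
      rw [norm_sub_sq_real, real_inner_smul_right, norm_smul]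
      simp [abs_of_pos ht, mul_pow]
    rw [hnorm] at hmin
    simp only [smul_eq_mul] at hconv
    set s := ⟪x - p x, z - p x⟫ with hs
    set A := ‖z - p x‖ ^ 2 with hA
    have h2l : (0:ℝ) < 2 * lam := by linarith
    have h6 : ‖x - p x‖ ^ 2 / (2 * lam) - (‖x - p x‖ ^ 2 - 2 * (t * s) + t ^ 2 * A) / (2 * lam)
        ≤ t * (g z - g (p x)) := by linarith
    rw [div_sub_div_same] at h6
    have h6' : (2 * (t * s) - t ^ 2 * A) / (2 * lam) ≤ t * (g z - g (p x)) := by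
      have : ‖x - p x‖ ^ 2 - (‖x - p x‖ ^ 2 - 2 * (t * s) + t ^ 2 * A)
          = 2 * (t * s) - t ^ 2 * A := by ring
      rwa [this] at h6
    have h8 : 2 * (t * s) - t ^ 2 * A ≤ t * (g z - g (p x)) * (2 * lam) :=
      (div_le_iff₀ h2l).1 h6'
    have h9 : (2 * t) * s ≤ (2 * t) * (lam * (g z - g (p x)) + t * A / 2) := by nlinarith [h8]
    exact le_of_mul_le_mul_left h9 (by linarith)
  rcases eq_or_ne (‖z - p x‖ ^ 2) 0 with h0 | h0
  · have := key 1 one_pos le_rfl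
    rw [h0] at this; linarith
  · have hpos : 0 < ‖z - p x‖ ^ 2 := lt_of_le_of_ne (by positivity) (Ne.symm h0)
    refine le_of_forall_pos_le_add fun ε hε => ?_
    set t : ℝ := min 1 (2 * ε / ‖z - p x‖ ^ 2) with ht
    have htpos : 0 < t := lt_min one_pos (by positivity)
    have h2 := key t htpos (min_le_left _ _)
    have h3 : t * ‖z - p x‖ ^ 2 / 2 ≤ ε := by
      have h4 : t ≤ 2 * ε / ‖z - p x‖ ^ 2 := min_le_right _ _
      have h5 : t * ‖z - p x‖ ^ 2 ≤ 2 * ε := (le_div_iff₀ hpos).1 h4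
      linarith
    linarith

/-- The prox map is nonexpansive. -/
lemma prox_lipschitz (hg : ConvexOn ℝ Set.univ g) (hlam : 0 < lam)
    (hp : ∀ x z : EuclideanSpace ℝ (Fin d),
      g (p x) + ‖x - p x‖ ^ 2 / (2 * lam) ≤ g z + ‖x - z‖ ^ 2 / (2 * lam))
    (x y : EuclideanSpace ℝ (Fin d)) :
    ‖p y - p x‖ ≤ ‖y - x‖ := by
  have h1 := prox_inner_le g lam p hg hlam hp x (p y)
  have h2 := prox_inner_le g lam p hg hlam hp y (p x)
  have hfirm : ‖p y - p x‖ ^ 2 ≤ ⟪y - x, p y - p x⟫ := by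
    have hsum : ⟪x - p x, p y - p x⟫ + ⟪y - p y, p x - p y⟫ ≤ 0 := by linarith
    have e1 : ⟪y - p y, p x - p y⟫ = -⟪y - p y, p y - p x⟫ := by
      rw [← inner_neg_right]; congr 1; module
    have e2 : ⟪y - x, p y - p x⟫ - ‖p y - p x‖ ^ 2
        = ⟪(y - p y) - (x - p x), p y - p x⟫ := by
      rw [← real_inner_self_eq_norm_sq, ← inner_sub_left]
      congr 1; module
    have e3 : ⟪(y - p y) - (x - p x), p y - p x⟫
        = ⟪y - p y, p y - p x⟫ - ⟪x - p x, p y - p x⟫ := inner_sub_left _ _ _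
    nlinarith [hsum, e1, e2, e3]
  rcases eq_or_lt_of_le (norm_nonneg (p y - p x)) with h0 | h0
  · rw [← h0]; exact norm_nonneg _
  · have := real_inner_le_norm (y - x) (p y - p x)
    nlinarith [hfirm, this]

end aux

/-- If `g : ℝ^d → ℝ` is convex, `lam > 0`, and `p x` minimizes
`y ↦ g(y) + ‖x − y‖²/(2 lam)` for every `x`, then the Moreau–Yoshida envelope `g^lam`
is differentiable at every `x` with gradient `(x − p(x))/lam`. -/
theorem moreauEnv_hasGradient {d : ℕ} (g : EuclideanSpace ℝ (Fin d) → ℝ)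
    (hg : ConvexOn ℝ Set.univ g) (lam : ℝ) (hlam : 0 < lam)
    (p : EuclideanSpace ℝ (Fin d) → EuclideanSpace ℝ (Fin d))
    (hp : ∀ x z : EuclideanSpace ℝ (Fin d),
      g (p x) + ‖x - p x‖ ^ 2 / (2 * lam) ≤ g z + ‖x - z‖ ^ 2 / (2 * lam)) :
    ∀ x : EuclideanSpace ℝ (Fin d),
      HasGradientAt (moreauEnv g lam) ((1 / lam) • (x - p x)) x := by
  intro x
  set f := moreauEnv g lam with hf
  -- one-sided quadratic bound, for arbitrary pair of points
  have bound : ∀ a b : EuclideanSpace ℝ (Fin d),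
      f b - f a - ⟪(1 / lam) • (a - p a), b - a⟫ ≤ ‖b - a‖ ^ 2 / (2 * lam) := by
    intro a b
    have h1 : f b ≤ g (p a) + ‖b - p a‖ ^ 2 / (2 * lam) := moreauEnv_le g lam p hp b (p a)
    have h2 : f a = g (p a) + ‖a - p a‖ ^ 2 / (2 * lam) := moreauEnv_eq g lam p hp a
    have hexp : ‖b - p a‖ ^ 2 = ‖a - p a‖ ^ 2 + 2 * ⟪a - p a, b - a⟫ + ‖b - a‖ ^ 2 := by
      have : b - p a = (a - p a) + (b - a) := by module
      rw [this, norm_add_sq_real]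
    have hin : ⟪(1 / lam) • (a - p a), b - a⟫ = (1 / lam) * ⟪a - p a, b - a⟫ :=
      real_inner_smul_left _ _ _
    rw [hin]
    rw [h2]
    have : g (p a) + ‖b - p a‖ ^ 2 / (2 * lam)
        - (g (p a) + ‖a - p a‖ ^ 2 / (2 * lam)) - 1 / lam * ⟪a - p a, b - a⟫
        = ‖b - a‖ ^ 2 / (2 * lam) := by
      rw [hexp]; field_simp; ring
    linarith
  -- two-sided bound
  have err_bound : ∀ y : EuclideanSpace ℝ (Fin d),
      |f y - f x - ⟪(1 / lam) • (x - p x), y - x⟫| ≤ (5 / (2 * lam)) * ‖y - x‖ ^ 2 := by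
    intro y
    have hub := bound x y
    have hlb := bound y x
    -- rewrite hlb
    have hinx : ⟪(1 / lam) • (x - p x), y - x⟫ = (1 / lam) * ⟪x - p x, y - x⟫ :=
      real_inner_smul_left _ _ _
    have hiny : ⟪(1 / lam) • (y - p y), x - y⟫ = (1 / lam) * ⟪y - p y, x - y⟫ :=
      real_inner_smul_left _ _ _
    rw [hinx] at hub ⊢
    rw [hiny] at hlb
    have hnn : ‖x - y‖ = ‖y - x‖ := norm_sub_rev x y
    rw [hnn] at hlb
    -- ⟪y - p y, x - y⟫ = -⟪y - p y, y - x⟫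
    have e1 : ⟪y - p y, x - y⟫ = -⟪y - p y, y - x⟫ := by
      rw [← inner_neg_right]; congr 1; module
    rw [e1] at hlb
    -- hlb : f x - f y + (1/lam) * ⟪y - p y, y - x⟫ ≤ ‖y-x‖²/(2 lam)
    -- difference of inner products
    have hdiff : |⟪y - p y, y - x⟫ - ⟪x - p x, y - x⟫| ≤ 2 * ‖y - x‖ ^ 2 := by
      rw [← inner_sub_left]
      have hb : ‖(y - p y) - (x - p x)‖ ≤ 2 * ‖y - x‖ := by
        have : (y - p y) - (x - p x) = (y - x) - (p y - p x) := by module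
        rw [this]
        calc ‖(y - x) - (p y - p x)‖ ≤ ‖y - x‖ + ‖p y - p x‖ := norm_sub_le _ _
          _ ≤ ‖y - x‖ + ‖y - x‖ := by
              have := prox_lipschitz g lam p hg hlam hp x y
              linarith
          _ = 2 * ‖y - x‖ := by ring
      calc |⟪(y - p y) - (x - p x), y - x⟫| ≤ ‖(y - p y) - (x - p x)‖ * ‖y - x‖ :=
            abs_real_inner_le_norm _ _
        _ ≤ 2 * ‖y - x‖ * ‖y - x‖ := by
            apply mul_le_mul_of_nonneg_right hb (norm_nonneg _)
        _ = 2 * ‖y - x‖ ^ 2 := by ring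
    rw [abs_le]
    have hd := abs_le.1 hdiff
    have hilam : (0:ℝ) < 1 / lam := by positivity
    have e5 : 5 / (2 * lam) = (5 / 2) * (1 / lam) := by ring
    have e6 : ‖y - x‖ ^ 2 / (2 * lam) = (1 / 2) * (1 / lam) * ‖y - x‖ ^ 2 := by ring
    have h10 : (1 / lam) * (-(2 * ‖y - x‖ ^ 2))
        ≤ (1 / lam) * (⟪y - p y, y - x⟫ - ⟪x - p x, y - x⟫) :=
      mul_le_mul_of_nonneg_left hd.1 hilam.le
    have h11 : (0:ℝ) ≤ (1 / lam) * ‖y - x‖ ^ 2 := by positivity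
    constructor
    · nlinarith [hlb, h10, e5, e6, h11]
    · nlinarith [hub, e5, e6, h11]
  -- conclude
  rw [hasGradientAt_iff_isLittleO]
  rw [Asymptotics.isLittleO_iff]
  intro c hc
  have hC : (0:ℝ) < 5 / (2 * lam) := by positivity
  have hr : (0:ℝ) < c / (5 / (2 * lam)) := by positivity
  filter_upwards [Metric.ball_mem_nhds x hr] with y hy
  have hdist : ‖y - x‖ < c / (5 / (2 * lam)) := by
    rwa [Metric.mem_ball, dist_eq_norm] at hy
  have h1 := err_bound y
  have hnorm : ‖f y - f x - ⟪(1 / lam) • (x - p x), y - x⟫‖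
      = |f y - f x - ⟪(1 / lam) • (x - p x), y - x⟫| := rfl
  rw [hnorm]
  calc |f y - f x - ⟪(1 / lam) • (x - p x), y - x⟫|
      ≤ (5 / (2 * lam)) * ‖y - x‖ ^ 2 := h1
    _ ≤ c * ‖y - x‖ := by
        have h2 : (5 / (2 * lam)) * ‖y - x‖ ≤ c := by
          have : (5 / (2 * lam)) * ‖y - x‖ ≤ (5 / (2 * lam)) * (c / (5 / (2 * lam))) :=
            mul_le_mul_of_nonneg_left hdist.le hC.le
          rwa [mul_div_cancel₀ _ hC.ne'] at this
        nlinarith [norm_nonneg (y - x), h2]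
end

section
/- (Euclidean analogue of the key inequality in Theorem 1.) Let f : ℝ^d → ℝ be μ-strongly convex (μ > 0), g : ℝ^d → ℝ convex, α > 0, λ > 0. Suppose x* minimizes G := f + α·g over ℝ^d and x^λ minimizes G^λ := f + α·g^λ over ℝ^d, where g^λ is the Moreau–Yoshida envelope of g. Then ‖x^λ − x*‖² ≤ (α/μ)·( g(x^λ) − g^λ(x^λ) ). -/
/-!
`f + α g` and `f + α g^λ` are both `μ`-strongly convex: `g^λ` is convex, being the partial
infimum of the jointly convex `(x, y) ↦ g y + ‖x - y‖² / (2λ)`. A `μ`-strongly convex function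
exceeds its minimum at `y` by at least `μ/2 ‖y - x_min‖²`. Applying this to each minimizer at the
other one and adding gives `μ ‖x^λ - x*‖² ≤ α (g x^λ - g^λ x^λ) + α (g^λ x* - g x*)`, and the last
term is nonpositive because `g^λ ≤ g`.
-/

open Set Filter Topology

section StrongConvexity

variable {E : Type*} [NormedAddCommGroup E] [NormedSpace ℝ E] {s : Set E} {m : ℝ} {f g : E → ℝ}

lemma strongConvexOn_univ_of_forall
    (hf : ∀ y z : E, ∀ t : ℝ, 0 ≤ t → t ≤ 1 →
      f (t • y + (1 - t) • z) ≤ t * f y + (1 - t) * f z - m / 2 * (t * (1 - t) * ‖y - z‖ ^ 2)) :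
    StrongConvexOn univ m f := by
  refine ⟨convex_univ, fun y _ z _ a b ha hb hab => ?_⟩
  obtain rfl : b = 1 - a := by linarith
  have := hf y z a ha (by linarith)
  simp only [smul_eq_mul]
  linarith

lemma StrongConvexOn.add_convexOn (hf : StrongConvexOn s m f) (hg : ConvexOn ℝ s g) :
    StrongConvexOn s m (f + g) := by
  simpa [StrongConvexOn] using hf.add hg.uniformConvexOn_zero

lemma StrongConvexOn.add_sq_norm_sub_le_of_isMinOn (hf : StrongConvexOn s m f) {x y : E}
    (hmin : IsMinOn f s x) (hx : x ∈ s) (hy : y ∈ s) :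
    f x + m / 2 * ‖y - x‖ ^ 2 ≤ f y := by
  -- the strong-convexity inequality at `t • y + (1 - t) • x`, divided by `t`; then let `t → 0`
  have hsec : ∀ t ∈ Ioo (0 : ℝ) 1, f x + (1 - t) * (m / 2 * ‖y - x‖ ^ 2) ≤ f y := by
    rintro t ⟨ht0, ht1⟩
    have hconv := hf.2 hy hx ht0.le (by linarith) (add_sub_cancel t 1)
    have hle : f x ≤ f (t • y + (1 - t) • x) :=
      hmin (hf.1 hy hx ht0.le (by linarith) (add_sub_cancel t 1))
    simp only [smul_eq_mul] at hconv
    nlinarith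
  have hlim : Tendsto (fun t : ℝ => f x + (1 - t) * (m / 2 * ‖y - x‖ ^ 2)) (𝓝[>] 0)
      (𝓝 (f x + m / 2 * ‖y - x‖ ^ 2)) :=
    (Continuous.tendsto' (by fun_prop) 0 _ (by simp)).mono_left nhdsWithin_le_nhds
  exact le_of_tendsto hlim (eventually_of_mem (Ioo_mem_nhdsGT one_pos) hsec)

end StrongConvexity

lemma ConvexOn.ciInf_snd {E F : Type*} [AddCommGroup E] [Module ℝ E] [AddCommGroup F]
    [Module ℝ F] {h : E × F → ℝ} (hh : ConvexOn ℝ univ h)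
    (hbdd : ∀ x, BddBelow (range fun y => h (x, y))) :
    ConvexOn ℝ univ fun x => ⨅ y, h (x, y) := by
  refine ⟨convex_univ, fun x₁ _ x₂ _ a b ha hb hab => le_of_forall_pos_le_add fun ε hε => ?_⟩
  obtain ⟨y₁, hy₁⟩ := exists_lt_of_ciInf_lt (lt_add_of_pos_right (⨅ y, h (x₁, y)) hε)
  obtain ⟨y₂, hy₂⟩ := exists_lt_of_ciInf_lt (lt_add_of_pos_right (⨅ y, h (x₂, y)) hε)
  have hconv := hh.2 (mem_univ (x₁, y₁)) (mem_univ (x₂, y₂)) ha hb hab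
  simp only [Prod.smul_mk, Prod.mk_add_mk, smul_eq_mul] at hconv ⊢
  calc ⨅ y, h (a • x₁ + b • x₂, y) ≤ h (a • x₁ + b • x₂, a • y₁ + b • y₂) :=
        ciInf_le (hbdd _) _
    _ ≤ a * h (x₁, y₁) + b * h (x₂, y₂) := hconv
    _ ≤ a * ((⨅ y, h (x₁, y)) + ε) + b * ((⨅ y, h (x₂, y)) + ε) := by gcongr
    _ = a * (⨅ y, h (x₁, y)) + b * (⨅ y, h (x₂, y)) + ε := by
        linear_combination ε * hab

lemma ConvexOn.exists_sub_mul_norm_le {E : Type*} [NormedAddCommGroup E] [NormedSpace ℝ E]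
    [FiniteDimensional ℝ E] {g : E → ℝ} (hg : ConvexOn ℝ univ g) :
    ∃ a b : ℝ, 0 ≤ b ∧ ∀ y, a - b * ‖y‖ ≤ g y := by
  obtain ⟨z, -, hmin⟩ := (isCompact_closedBall (0 : E) 1).exists_isMinOn
    ⟨0, Metric.mem_closedBall_self zero_le_one⟩ hg.locallyLipschitz.continuous.continuousOn
  have hball : ∀ y, ‖y‖ ≤ 1 → g z ≤ g y := fun y hy => hmin (by simpa using hy)
  have hz0 : g z ≤ g 0 := hball 0 (by simp)
  refine ⟨g z, g 0 - g z, by linarith, fun y => ?_⟩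
  rcases le_or_gt ‖y‖ 1 with hy | hy
  · nlinarith [hball y hy, norm_nonneg y]
  · have hpos : 0 < ‖y‖ := by linarith
    have hconv := hg.2 (mem_univ y) (mem_univ 0) (inv_nonneg.2 hpos.le)
      (sub_nonneg.2 (inv_le_one_of_one_le₀ hy.le)) (add_sub_cancel _ 1)
    -- `‖y‖⁻¹ • y` is a point of the unit ball on the segment from `0` to `y`
    have hunit : ‖‖y‖⁻¹ • y‖ ≤ 1 := by
      rw [norm_smul, norm_inv, norm_norm, inv_mul_cancel₀ hpos.ne']
    rw [smul_zero, add_zero, smul_eq_mul, smul_eq_mul] at hconv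
    have key : ‖y‖ * g z ≤ g y + (‖y‖ - 1) * g 0 :=
      calc ‖y‖ * g z ≤ ‖y‖ * (‖y‖⁻¹ * g y + (1 - ‖y‖⁻¹) * g 0) :=
            mul_le_mul_of_nonneg_left ((hball _ hunit).trans hconv) hpos.le
        _ = g y + (‖y‖ - 1) * g 0 := by field_simp
    nlinarith

lemma ConvexOn.bddBelow_range_add_sq_norm_sub_div {E : Type*} [NormedAddCommGroup E]
    [NormedSpace ℝ E] [FiniteDimensional ℝ E] {g : E → ℝ} (hg : ConvexOn ℝ univ g) {lam : ℝ}
    (hlam : 0 < lam) (x : E) :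
    BddBelow (range fun y => g y + ‖x - y‖ ^ 2 / (2 * lam)) := by
  obtain ⟨a, b, hb, hgab⟩ := hg.exists_sub_mul_norm_le
  refine ⟨a - b * ‖x‖ - lam * b ^ 2 / 2, ?_⟩
  rintro _ ⟨y, rfl⟩
  have htri : ‖y‖ ≤ ‖x‖ + ‖x - y‖ := by
    simpa [norm_sub_rev] using norm_le_insert' y x
  have hamgm : b * ‖x - y‖ ≤ lam * b ^ 2 / 2 + ‖x - y‖ ^ 2 / (2 * lam) := by
    have : 0 ≤ (‖x - y‖ - lam * b) ^ 2 / (2 * lam) := by positivity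
    have heq : (‖x - y‖ - lam * b) ^ 2 / (2 * lam)
        = lam * b ^ 2 / 2 + ‖x - y‖ ^ 2 / (2 * lam) - b * ‖x - y‖ := by
      field_simp; ring
    linarith
  nlinarith [hgab y, mul_le_mul_of_nonneg_left htri hb]

section MoreauEnvelope

variable {d : ℕ} {g : EuclideanSpace ℝ (Fin d) → ℝ} {lam : ℝ}

lemma moreauEnv_le_s10 (hg : ConvexOn ℝ univ g) (hlam : 0 < lam) (x : EuclideanSpace ℝ (Fin d)) :
    moreauEnv g lam x ≤ g x := by
  simpa [moreauEnv] using ciInf_le (hg.bddBelow_range_add_sq_norm_sub_div hlam x) x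

lemma convexOn_moreauEnv (hg : ConvexOn ℝ univ g) (hlam : 0 < lam) :
    ConvexOn ℝ univ (moreauEnv g lam) := by
  let E := EuclideanSpace ℝ (Fin d)
  have hsq : ConvexOn ℝ univ fun p : E × E => ‖p.1 - p.2‖ ^ 2 :=
    (convexOn_univ_norm.pow (fun _ _ => norm_nonneg _) 2).comp_linearMap
      (LinearMap.fst ℝ E E - LinearMap.snd ℝ E E)
  have hjoint : ConvexOn ℝ univ fun p : E × E => g p.2 + ‖p.1 - p.2‖ ^ 2 / (2 * lam) := by
    have hsum := (hg.comp_linearMap (LinearMap.snd ℝ E E)).add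
      (hsq.smul (by positivity : 0 ≤ (2 * lam)⁻¹))
    rw [preimage_univ] at hsum
    exact hsum.congr fun p _ => by simp [div_eq_inv_mul]
  exact hjoint.ciInf_snd fun x => hg.bddBelow_range_add_sq_norm_sub_div hlam x

end MoreauEnvelope

/-- Euclidean analogue of the key inequality in Theorem 1: if `f` is `μ`-strongly
convex (`μ > 0`), `g` is convex, `α > 0`, `lam > 0`, `x*` minimizes `f + α g`, and
`x^lam` minimizes `f + α g^lam`, then
`‖x^lam − x*‖² ≤ (α/μ) (g(x^lam) − g^lam(x^lam))`. -/
theorem moreau_approx_minimizer_bound {d : ℕ}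
    (f g : EuclideanSpace ℝ (Fin d) → ℝ) (μ α lam : ℝ)
    (hμ : 0 < μ) (hα : 0 < α) (hlam : 0 < lam)
    (hf : ∀ y z : EuclideanSpace ℝ (Fin d), ∀ t : ℝ, 0 ≤ t → t ≤ 1 →
      f (t • y + (1 - t) • z) ≤
        t * f y + (1 - t) * f z - μ / 2 * (t * (1 - t) * ‖y - z‖ ^ 2))
    (hg : ConvexOn ℝ Set.univ g)
    (xstar xlam : EuclideanSpace ℝ (Fin d))
    (hxstar : ∀ y : EuclideanSpace ℝ (Fin d), f xstar + α * g xstar ≤ f y + α * g y)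
    (hxlam : ∀ y : EuclideanSpace ℝ (Fin d),
      f xlam + α * moreauEnv g lam xlam ≤ f y + α * moreauEnv g lam y) :
    ‖xlam - xstar‖ ^ 2 ≤ (α / μ) * (g xlam - moreauEnv g lam xlam) := by
  have hfμ := strongConvexOn_univ_of_forall hf
  have hG := (hfμ.add_convexOn (hg.smul hα.le)).add_sq_norm_sub_le_of_isMinOn
    (isMinOn_univ_iff.2 hxstar) (mem_univ _) (mem_univ xlam)
  have hGlam := (hfμ.add_convexOn ((convexOn_moreauEnv hg hlam).smul hα.le))
    |>.add_sq_norm_sub_le_of_isMinOn (isMinOn_univ_iff.2 hxlam) (mem_univ _) (mem_univ xstar)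
  have henv := mul_le_mul_of_nonneg_left (moreauEnv_le_s10 hg hlam xstar) hα.le
  rw [norm_sub_rev] at hGlam
  simp only [Pi.add_apply, smul_eq_mul] at hG hGlam
  rw [div_mul_eq_mul_div, le_div_iff₀ hμ]
  linarith
end

section
/- (Hilbert-space analogue of the convergence rate in Theorem 3.) Let E be a real inner product space, let f : E → ℝ be μ-strongly convex (μ > 0) and differentiable with gradient ∇f, and let x* be a minimizer of f on E. Let x : ℝ → E be a curve satisfying the gradient flow x'(t) = −∇f(x(t)) for all t ≥ 0 (i.e. x has derivative −∇f(x(t)) at each t ≥ 0). Then for all t ≥ 0, f(x(t)) − f(x*) ≤ exp(−2μt)·( f(x(0)) − f(x*) ). -/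
/-!
Strong convexity gives, at every point `z` and for every `w`, the first-order bound
`f w ≥ f z + ⟪∇f z, w - z⟫ + μ/2 ‖w - z‖² ≥ f z - ‖∇f z‖² / (2μ)`, the Polyak–Łojasiewicz
inequality `2μ (f z - f w) ≤ ‖∇f z‖²`. Along the flow `d/dt (f (x t) - f x*) = -‖∇f (x t)‖²`,
which is therefore at most `-2μ (f (x t) - f x*)`, and Grönwall's inequality gives the decay.
-/

open Set Filter Topology

theorem UniformConvexOn.apply_sub_add_le {E : Type*} [NormedAddCommGroup E] [NormedSpace ℝ E]
    {s : Set E} {φ : ℝ → ℝ} {f : E → ℝ} {f' : E →L[ℝ] ℝ} {y z : E}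
    (hf : UniformConvexOn s φ f) (hy : y ∈ s) (hz : z ∈ s) (hf' : HasFDerivAt f f' z) :
    f' (y - z) + φ ‖y - z‖ ≤ f y - f z := by
  set c : ℝ → E := fun a => a • y + (1 - a) • z
  have hc0 : c 0 = z := by simp [c]
  have hc : HasDerivAt c (y - z) 0 := by
    refine (((hasDerivAt_id (0 : ℝ)).smul_const y).add
      (((hasDerivAt_id (0 : ℝ)).const_sub 1).smul_const z)).congr_deriv ?_
    simp [sub_eq_add_neg]
  have hslope : Tendsto (slope (f ∘ c) 0) (𝓝[>] 0) (𝓝 (f' (y - z))) := by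
    rw [← hc0] at hf'
    exact (hasDerivAt_iff_tendsto_slope.mp (hf'.comp_hasDerivAt 0 hc)).mono_left
      (nhdsWithin_mono _ fun a ha => ne_of_gt ha)
  have hbound : ∀ᶠ a in 𝓝[>] (0 : ℝ), slope (f ∘ c) 0 a ≤ f y - f z - (1 - a) * φ ‖y - z‖ := by
    filter_upwards [Ioo_mem_nhdsGT (zero_lt_one' ℝ)] with a ⟨ha0, ha1⟩
    have := hf.2 hy hz ha0.le (sub_nonneg.2 ha1.le) (add_sub_cancel a 1)
    rw [slope_def_field, sub_zero, Function.comp_apply, Function.comp_apply, hc0,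
      div_le_iff₀ ha0]
    simp only [smul_eq_mul, c] at this ⊢
    linarith
  have hlim : Tendsto (fun a : ℝ => f y - f z - (1 - a) * φ ‖y - z‖) (𝓝[>] 0)
      (𝓝 (f y - f z - φ ‖y - z‖)) := by
    refine (Continuous.tendsto' ?_ 0 _ ?_).mono_left nhdsWithin_le_nhds
    · fun_prop
    · simp
  linarith [le_of_tendsto_of_tendsto hslope hlim hbound]

theorem StrongConvexOn.two_mul_sub_le_norm_sq {E : Type*} [NormedAddCommGroup E]
    [NormedSpace ℝ E] {s : Set E} {m : ℝ} {f : E → ℝ} {f' : E →L[ℝ] ℝ} {w z : E}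
    (hm : 0 ≤ m) (hf : StrongConvexOn s m f) (hw : w ∈ s) (hz : z ∈ s)
    (hf' : HasFDerivAt f f' z) :
    2 * m * (f z - f w) ≤ ‖f'‖ ^ 2 := by
  have hfirst := UniformConvexOn.apply_sub_add_le hf hw hz hf'
  have hdual : -(‖f'‖ * ‖w - z‖) ≤ f' (w - z) :=
    (neg_le_neg ((Real.norm_eq_abs _).symm.trans_le (f'.le_opNorm _))).trans (neg_abs_le _)
  nlinarith [mul_le_mul_of_nonneg_left (add_le_add_left hdual _ |>.trans hfirst) hm,
    sq_nonneg (‖f'‖ - m * ‖w - z‖)]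

theorem le_mul_exp_of_hasDerivAt_le_mul {g g' : ℝ → ℝ} {K t : ℝ}
    (hg : ∀ s, 0 ≤ s → HasDerivAt g (g' s) s) (bound : ∀ s, 0 ≤ s → g' s ≤ K * g s)
    (ht : 0 ≤ t) : g t ≤ g 0 * Real.exp (K * t) := by
  have := le_gronwallBound_of_liminf_deriv_right_le (ε := 0)
    (fun s hs => (hg s hs.1).continuousAt.continuousWithinAt)
    (fun s hs _ hr => (hg s hs.1).hasDerivWithinAt.liminf_right_slope_le hr) le_rfl
    (fun s hs => (bound s hs.1).trans_eq (add_zero _).symm) t ⟨ht, le_rfl⟩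
  rwa [gronwallBound_ε0, sub_zero] at this

theorem gradient_flow_exponential_convergence_general {E : Type*} [NormedAddCommGroup E]
    [InnerProductSpace ℝ E]
    (f : E → ℝ) (f' : E → E) (μ : ℝ) (hμ : 0 < μ)
    (hconv : ∀ y z : E, ∀ t : ℝ, 0 ≤ t → t ≤ 1 →
      f (t • y + (1 - t) • z) ≤
        t * f y + (1 - t) * f z - μ / 2 * (t * (1 - t) * ‖y - z‖ ^ 2))
    (hdiff : ∀ x : E, HasFDerivAt f (innerSL ℝ (f' x)) x)
    (xstar : E)
    (x : ℝ → E) (hflow : ∀ t : ℝ, 0 ≤ t → HasDerivAt x (-(f' (x t))) t) :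
    ∀ t : ℝ, 0 ≤ t →
      f (x t) - f xstar ≤ Real.exp (-2 * μ * t) * (f (x 0) - f xstar) := by
  have hstrong : StrongConvexOn univ μ f := by
    refine ⟨convex_univ, fun y _ z _ a b ha _ hab => ?_⟩
    obtain rfl : b = 1 - a := by linarith
    exact (hconv y z a ha (by linarith)).trans_eq (by simp only [smul_eq_mul]; ring)
  have hPL (z : E) : 2 * μ * (f z - f xstar) ≤ ‖f' z‖ ^ 2 := by
    simpa only [innerSL_apply_norm] using
      hstrong.two_mul_sub_le_norm_sq hμ.le (mem_univ _) (mem_univ _) (hdiff z)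
  have hdescent (t : ℝ) (ht : 0 ≤ t) :
      HasDerivAt (fun t => f (x t) - f xstar) (-‖f' (x t)‖ ^ 2) t := by
    simpa [Function.comp_def, inner_neg_right, real_inner_self_eq_norm_sq] using
      ((hdiff (x t)).comp_hasDerivAt t (hflow t ht)).sub_const (f xstar)
  intro t ht
  rw [mul_comm]
  exact le_mul_exp_of_hasDerivAt_le_mul hdescent (fun s _ => by linarith [hPL (x s)]) ht

/-- Convergence rate of the gradient flow of a strongly convex function: if `f : E → ℝ`
is `μ`-strongly convex (`μ > 0`) and differentiable with gradient `f'`, `x*` minimizes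
`f`, and the curve `x : ℝ → E` satisfies `x'(t) = −f'(x(t))` for all `t ≥ 0`, then
`f(x(t)) − f(x*) ≤ exp(−2 μ t) (f(x(0)) − f(x*))` for all `t ≥ 0`. -/
theorem gradient_flow_exponential_convergence {E : Type*} [NormedAddCommGroup E]
    [InnerProductSpace ℝ E]
    (f : E → ℝ) (f' : E → E) (μ : ℝ) (hμ : 0 < μ)
    (hconv : ∀ y z : E, ∀ t : ℝ, 0 ≤ t → t ≤ 1 →
      f (t • y + (1 - t) • z) ≤
        t * f y + (1 - t) * f z - μ / 2 * (t * (1 - t) * ‖y - z‖ ^ 2))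
    (hdiff : ∀ x : E, HasFDerivAt f (innerSL ℝ (f' x)) x)
    (xstar : E) (hmin : ∀ y : E, f xstar ≤ f y)
    (x : ℝ → E) (hflow : ∀ t : ℝ, 0 ≤ t → HasDerivAt x (-(f' (x t))) t) :
    ∀ t : ℝ, 0 ≤ t →
      f (x t) - f xstar ≤ Real.exp (-2 * μ * t) * (f (x 0) - f xstar) :=
  gradient_flow_exponential_convergence_general f f' μ hμ hconv hdiff xstar x hflow
end
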